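/- arXiv:2604.05787 — 2 statements merged into one kernel-verified Lean document; each statement's English description precedes it below -/
import Mathlib

section
/- Let V^G(η) = (1/(2π)) (η^⊥/|η|²)(1 - e^{-|η|²/4}). There exists a constant C > 0 such that for all η, η̃ ∈ ℝ² with |η| ≤ |η̃|/2 and |η̃| ≥ 1, one has |V^G(η + η̃) − V^G(η̃)| ≤ C (|η| + |η|²/|η̃|)/|η̃|² + e^{-|η̃|²/16}. -/
open Real

noncomputable section

/-- The Biot–Savart velocity of the Oseen vortex:
`V^G(η) = (1/(2π)) (η^⊥/|η|²)(1 - e^{-|η|²/4})` with `η^⊥ = (-η₂, η₁)`. -/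
def VG (η : ℝ × ℝ) : ℝ × ℝ :=
  ((1 / (2 * π)) * (-η.2 / (η.1 ^ 2 + η.2 ^ 2)) * (1 - Real.exp (-(η.1 ^ 2 + η.2 ^ 2) / 4)),
   (1 / (2 * π)) * (η.1 / (η.1 ^ 2 + η.2 ^ 2)) * (1 - Real.exp (-(η.1 ^ 2 + η.2 ^ 2) / 4)))

/-- The Euclidean norm on `ℝ²` written explicitly. -/
def nrm (η : ℝ × ℝ) : ℝ := Real.sqrt (η.1 ^ 2 + η.2 ^ 2)

private lemma sqrt_sq_add_sq_le (x y : ℝ) : Real.sqrt (x ^ 2 + y ^ 2) ≤ |x| + |y| := by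
  have h : x ^ 2 + y ^ 2 ≤ (|x| + |y|) ^ 2 := by
    nlinarith [sq_abs x, sq_abs y, mul_nonneg (abs_nonneg x) (abs_nonneg y)]
  calc Real.sqrt (x ^ 2 + y ^ 2) ≤ Real.sqrt ((|x| + |y|) ^ 2) := Real.sqrt_le_sqrt h
  _ = |x| + |y| := Real.sqrt_sq (by positivity)

private lemma cauchy2 (x1 x2 y1 y2 : ℝ) :
    |x1 * y1 + x2 * y2| ≤ Real.sqrt (x1 ^ 2 + x2 ^ 2) * Real.sqrt (y1 ^ 2 + y2 ^ 2) := by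
  have h1 := Real.sq_sqrt (show (0:ℝ) ≤ x1 ^ 2 + x2 ^ 2 by positivity)
  have h2 := Real.sq_sqrt (show (0:ℝ) ≤ y1 ^ 2 + y2 ^ 2 by positivity)
  have h3 : (x1 * y1 + x2 * y2) ^ 2
      ≤ (Real.sqrt (x1 ^ 2 + x2 ^ 2) * Real.sqrt (y1 ^ 2 + y2 ^ 2)) ^ 2 := by
    rw [mul_pow, h1, h2]; nlinarith [sq_nonneg (x1 * y2 - x2 * y1)]
  calc |x1 * y1 + x2 * y2| = Real.sqrt ((x1 * y1 + x2 * y2) ^ 2) := (Real.sqrt_sq_eq_abs _).symm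
  _ ≤ Real.sqrt ((Real.sqrt (x1 ^ 2 + x2 ^ 2) * Real.sqrt (y1 ^ 2 + y2 ^ 2)) ^ 2) :=
      Real.sqrt_le_sqrt h3
  _ = _ := Real.sqrt_sq (by positivity)

private lemma abs_le_sqrt' {x c : ℝ} (h : x ^ 2 ≤ c) : |x| ≤ Real.sqrt c := by
  rw [← Real.sqrt_sq_eq_abs]; exact Real.sqrt_le_sqrt h

private lemma abs_sub_le'' (a b : ℝ) : |a - b| ≤ |a| + |b| := by
  calc |a - b| = |a + (-b)| := by ring_nf
  _ ≤ |a| + |(-b)| := abs_add_le _ _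
  _ = |a| + |b| := by rw [abs_neg]


set_option maxHeartbeats 1000000 in
/-- difference estimate for `V^G`: there is `C > 0` such that for all
`η, η̃ ∈ ℝ²` with `|η| ≤ |η̃|/2` and `|η̃| ≥ 1`,
`|V^G(η + η̃) − V^G(η̃)| ≤ C (|η| + |η|²/|η̃|)/|η̃|² + e^{-|η̃|²/16}`. -/
theorem oseen_velocity_difference_estimate :
    ∃ C > (0 : ℝ), ∀ η ηt : ℝ × ℝ,
      nrm η ≤ nrm ηt / 2 → 1 ≤ nrm ηt →
      nrm (VG (η + ηt) - VG ηt)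
        ≤ C * (nrm η + (nrm η) ^ 2 / nrm ηt) / (nrm ηt) ^ 2
          + Real.exp (-(ηt.1 ^ 2 + ηt.2 ^ 2) / 16) := by
  have hπ : (3:ℝ) < π := Real.pi_gt_three
  have hπ0 : (0:ℝ) < π := Real.pi_pos
  refine ⟨4, by norm_num, ?_⟩
  rintro ⟨x1, x2⟩ ⟨y1, y2⟩ hle hr1
  simp only [VG, nrm, Prod.mk_add_mk, Prod.mk_sub_mk] at hle hr1 ⊢
  set sb := y1 ^ 2 + y2 ^ 2 with hsb_def
  set sa := (x1 + y1) ^ 2 + (x2 + y2) ^ 2 with hsa_def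
  set s := Real.sqrt (x1 ^ 2 + x2 ^ 2) with hs_def
  set r := Real.sqrt sb with hr_def
  have hs0 : 0 ≤ s := Real.sqrt_nonneg _
  have hr' : Real.sqrt sb ≠ 0 := by positivity
  have hr0 : (0:ℝ) < r := by linarith
  have hsq : s ^ 2 = x1 ^ 2 + x2 ^ 2 := by rw [hs_def]; exact Real.sq_sqrt (by positivity)
  have hrq : r ^ 2 = sb := by
    rw [hr_def]; exact Real.sq_sqrt (by rw [hsb_def]; positivity)
  have hsb1 : 1 ≤ sb := by nlinarith [hr1, hrq]
  have hsb0 : (0:ℝ) < sb := by linarith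
  have hdot : |x1 * y1 + x2 * y2| ≤ s * r := by
    rw [hs_def, hr_def, hsb_def]; exact cauchy2 x1 x2 y1 y2
  have hsum : sa = s^2 + 2*(x1*y1 + x2*y2) + sb := by
    rw [hsa_def, hsq, hsb_def]; ring
  clear_value sb sa s r
  have hdl := (abs_le.1 hdot).1
  have hdu := (abs_le.1 hdot).2
  have hsa_lb : sb ≤ 4 * sa := by
    nlinarith [hsum, hrq, hdl, hle,
      mul_nonneg (by linarith : (0:ℝ) ≤ r - 2*s) (by linarith : (0:ℝ) ≤ 3*r - 2*s)]
  have hsa0 : (0:ℝ) < sa := by linarith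
  have hqa : r / 2 ≤ Real.sqrt sa := by
    have h : (r/2)^2 ≤ sa := by nlinarith
    calc r/2 = Real.sqrt ((r/2)^2) := (Real.sqrt_sq (by linarith)).symm
    _ ≤ _ := Real.sqrt_le_sqrt h
  have hqq : Real.sqrt sa ^ 2 = sa := Real.sq_sqrt hsa0.le
  have hEa : Real.exp (-sa / 4) ≤ Real.exp (-sb / 16) := by
    apply Real.exp_le_exp.2; linarith
  have hEb : Real.exp (-sb / 4) ≤ Real.exp (-sb / 16) := by
    apply Real.exp_le_exp.2; linarith
  have hE0 : (0:ℝ) < Real.exp (-sb / 16) := Real.exp_pos _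
  have hsab : |sa - sb| ≤ 2*(s*r) + s^2 := by
    have e : sa - sb = s^2 + 2*(x1*y1 + x2*y2) := by rw [hsum]; ring
    rw [e, abs_le]; constructor <;> nlinarith
  set P := (s*r + s^2)/r^3 with hP_def
  have hP0 : (0:ℝ) ≤ P := by rw [hP_def]; positivity
  have hPr : P * r^3 = s*r + s^2 := by rw [hP_def]; field_simp
  clear_value P
  have hπ6 : (1:ℝ)/(2*π) ≤ 1/6 := by
    apply one_div_le_one_div_of_le <;> [norm_num; linarith]
  have hsa' : sa ≠ 0 := hsa0.ne'
  have hsb' : sb ≠ 0 := hsb0.ne'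
  have key : ∀ ca cb : ℝ, |ca - cb| ≤ s → |cb| ≤ r → ca^2 ≤ sa →
      |(1/(2*π)) * (ca/sa) * (1 - Real.exp (-sa/4))
        - (1/(2*π)) * (cb/sb) * (1 - Real.exp (-sb/4))|
      ≤ 2*P + Real.exp (-sb/16)/2 := by
    intro ca cb hab hcb hca
    have hca' : |ca| ≤ Real.sqrt sa := abs_le_sqrt' hca
    have hid : (1/(2*π)) * (ca/sa) * (1 - Real.exp (-sa/4))
        - (1/(2*π)) * (cb/sb) * (1 - Real.exp (-sb/4))
        = (1/(2*π)) * ((ca*sb - cb*sa)/(sa*sb))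
          - (1/(2*π)) * (ca/sa) * Real.exp (-sa/4)
          + (1/(2*π)) * (cb/sb) * Real.exp (-sb/4) := by
      field_simp
      ring
    rw [hid]
    have hN : |ca*sb - cb*sa| ≤ 3*s*sb + s^2*r := by
      have e : ca*sb - cb*sa = (ca - cb)*sb - cb*(sa - sb) := by ring
      rw [e]
      refine le_trans (abs_sub_le'' _ _) ?_
      rw [abs_mul, abs_mul, abs_of_nonneg (by linarith : (0:ℝ) ≤ sb)]
      have h1 : |ca - cb| * sb ≤ s * sb := by
        apply mul_le_mul_of_nonneg_right hab (by linarith)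
      have h2 : |cb| * |sa - sb| ≤ r * (2*(s*r) + s^2) :=
        mul_le_mul hcb hsab (abs_nonneg _) hr0.le
      have h3 : r*(2*(s*r) + s^2) = 2*s*sb + s^2*r := by rw [← hrq]; ring
      linarith
    have hT0 : |(1/(2*π)) * ((ca*sb - cb*sa)/(sa*sb))| ≤ 2*P := by
      rw [abs_mul, abs_of_pos (by positivity : (0:ℝ) < 1/(2*π)), abs_div,
        abs_of_pos (mul_pos hsa0 hsb0)]
      have h4 : |ca*sb - cb*sa| / (sa*sb) ≤ 12*P := by
        rw [div_le_iff₀ (mul_pos hsa0 hsb0)]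
        have h5 : 3*(P*r^3)*r = 3*s*sb + 3*s^2*r := by rw [hPr, ← hrq]; ring
        have h6 : 12*P*(sa*sb) = 12*(P*sa*r^2) := by rw [hrq]; ring
        have h7 : (0:ℝ) ≤ P*r^2*(4*sa - r^2) :=
          mul_nonneg (mul_nonneg hP0 (sq_nonneg r)) (by linarith : (0:ℝ) ≤ 4*sa - r^2)
        have h8 : (0:ℝ) ≤ s^2*r := mul_nonneg (by positivity) hr0.le
        linarith [hN, h5, h6, h7, h8]
      calc (1/(2*π)) * (|ca*sb - cb*sa| / (sa*sb)) ≤ (1/6) * (12*P) := by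
            apply mul_le_mul hπ6 h4 (div_nonneg (abs_nonneg _) (by positivity)) (by norm_num)
        _ = 2*P := by ring
    have hT1 : |(1/(2*π)) * (ca/sa) * Real.exp (-sa/4)| ≤ Real.exp (-sb/16)/3 := by
      rw [abs_mul, abs_mul, abs_of_pos (by positivity : (0:ℝ) < 1/(2*π)), abs_div,
        abs_of_pos hsa0, abs_of_pos (Real.exp_pos _)]
      have hca2 : |ca| ≤ 2*sa := by
        have h9 : (0:ℝ) ≤ Real.sqrt sa * (2*Real.sqrt sa - 1) :=
          mul_nonneg (Real.sqrt_nonneg sa) (by linarith [hqa, hr1])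
        linarith [hca', hqq, h9]
      have hd : |ca|/sa ≤ 2 := by rw [div_le_iff₀ hsa0]; linarith
      calc (1/(2*π)) * (|ca|/sa) * Real.exp (-sa/4) ≤ ((1/6) * 2) * Real.exp (-sb/16) := by
            apply mul_le_mul
              (mul_le_mul hπ6 hd (div_nonneg (abs_nonneg _) hsa0.le) (by norm_num))
              hEa (Real.exp_pos _).le (by norm_num)
        _ = Real.exp (-sb/16)/3 := by ring
    have hT2 : |(1/(2*π)) * (cb/sb) * Real.exp (-sb/4)| ≤ Real.exp (-sb/16)/6 := by
      rw [abs_mul, abs_mul, abs_of_pos (by positivity : (0:ℝ) < 1/(2*π)), abs_div,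
        abs_of_pos hsb0, abs_of_pos (Real.exp_pos _)]
      have hd : |cb|/sb ≤ 1 := by
        rw [div_le_one hsb0]
        have h10 : (0:ℝ) ≤ (r - 1)*r := mul_nonneg (by linarith) hr0.le
        linarith [hcb, hrq, h10]
      calc (1/(2*π)) * (|cb|/sb) * Real.exp (-sb/4) ≤ ((1/6) * 1) * Real.exp (-sb/16) := by
            apply mul_le_mul
              (mul_le_mul hπ6 hd (div_nonneg (abs_nonneg _) hsb0.le) (by norm_num))
              hEb (Real.exp_pos _).le (by norm_num)
        _ = Real.exp (-sb/16)/6 := by ring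
    calc |(1/(2*π)) * ((ca*sb - cb*sa)/(sa*sb))
          - (1/(2*π)) * (ca/sa) * Real.exp (-sa/4)
          + (1/(2*π)) * (cb/sb) * Real.exp (-sb/4)|
        ≤ |(1/(2*π)) * ((ca*sb - cb*sa)/(sa*sb))
          - (1/(2*π)) * (ca/sa) * Real.exp (-sa/4)|
          + |(1/(2*π)) * (cb/sb) * Real.exp (-sb/4)| := abs_add_le _ _
      _ ≤ |(1/(2*π)) * ((ca*sb - cb*sa)/(sa*sb))|
          + |(1/(2*π)) * (ca/sa) * Real.exp (-sa/4)|
          + |(1/(2*π)) * (cb/sb) * Real.exp (-sb/4)| := by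
            linarith [abs_sub_le'' ((1/(2*π)) * ((ca*sb - cb*sa)/(sa*sb)))
              ((1/(2*π)) * (ca/sa) * Real.exp (-sa/4))]
      _ ≤ 2*P + Real.exp (-sb/16)/3 + Real.exp (-sb/16)/6 := by linarith
      _ ≤ 2*P + Real.exp (-sb/16)/2 := by linarith
  refine le_trans (sqrt_sq_add_sq_le _ _) ?_
  have hA := key (-(x2+y2)) (-y2) ?_ ?_ ?_
  rotate_left
  · have e : -(x2+y2) - -y2 = -x2 := by ring
    rw [e, abs_neg, hs_def]
    exact abs_le_sqrt' (by nlinarith [sq_nonneg x1])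
  · rw [abs_neg, hr_def]
    exact abs_le_sqrt' (by rw [hsb_def]; nlinarith [sq_nonneg y1])
  · rw [neg_pow, hsa_def]; nlinarith [sq_nonneg (x1+y1)]
  have hB := key (x1+y1) y1 ?_ ?_ ?_
  rotate_left
  · have e : x1 + y1 - y1 = x1 := by ring
    rw [e, hs_def]
    exact abs_le_sqrt' (by nlinarith [sq_nonneg x2])
  · rw [hr_def]
    exact abs_le_sqrt' (by rw [hsb_def]; nlinarith [sq_nonneg y1])
  · rw [hsa_def]; nlinarith [sq_nonneg (x2+y2)]
  have hrne : r ≠ 0 := ne_of_gt hr0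
  have hfin : 4 * (s + s ^ 2 / r) / r ^ 2 = 4 * P := by
    rw [hP_def]
    field_simp
  rw [hfin]
  linarith [hA, hB]
end
end

section
/- For 1/2 < β < 1, γ > 0, μ₀ > 0, 0 < t < μ₀/γ and μ < μ₀ − γt: (μ₀ − μ − γt)^β ∫₀^t (μ₀ − μ − γs)^{−1/2−β} (t−s)^{−1/2} ds ≤ C γ^{−1/2}, where C depends only on β. -/
open Real

set_option maxHeartbeats 1600000 in
/-- for `1/2 < β < 1` there exists `C > 0`, depending only on `β`, with
`(μ₀ − μ − γt)^β ∫₀^t (μ₀ − μ − γs)^{−1/2−β} (t−s)^{−1/2} ds ≤ C γ^{−1/2}` whenever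
`γ > 0`, `μ₀ > 0`, `0 < t < μ₀/γ` and `μ < μ₀ − γt`. -/
theorem singular_integral_bound_two :
    ∀ β : ℝ, 1 / 2 < β → β < 1 → ∃ C > (0 : ℝ),
      ∀ γ μ₀ t μ : ℝ, 0 < γ → 0 < μ₀ → 0 < t → t < μ₀ / γ → μ < μ₀ - γ * t →
        (μ₀ - μ - γ * t) ^ β *
            ∫ s in (0 : ℝ)..t, (μ₀ - μ - γ * s) ^ (-(1 / 2) - β) * (t - s) ^ (-(1 / 2) : ℝ)
          ≤ C / Real.sqrt γ := by
  intro β hβ1 hβ2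
  have hβ0 : 0 < β := by linarith
  refine ⟨4, by norm_num, ?_⟩
  intro γ μ₀ t μ hγ hμ₀ ht htμγ hμ
  set a := μ₀ - μ - γ * t with ha_def
  have ha : 0 < a := by simp only [ha_def]; linarith
  set F : ℝ → ℝ := fun s => (μ₀ - μ - γ * s) ^ (-(1 / 2) - β) * (t - s) ^ (-(1 / 2) : ℝ)
    with hF
  have hbase : ∀ s, μ₀ - μ - γ * s = a + γ * (t - s) := by
    intro s; simp only [ha_def]; ring
  have hbpos : ∀ s, s ≤ t → 0 < μ₀ - μ - γ * s := by
    intro s hs; rw [hbase]; nlinarith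
  set s₀ : ℝ := max 0 (t - a / γ) with hs₀_def
  have haγ : 0 < a / γ := div_pos ha hγ
  have hs₀0 : (0:ℝ) ≤ s₀ := le_max_left _ _
  have hs₀t : s₀ ≤ t := max_le ht.le (by linarith)
  have hs₀lt : s₀ < t := max_lt ht (by linarith)
  have hts₀ : t - s₀ ≤ a / γ := by
    have := le_max_right 0 (t - a / γ); linarith
  have hexp : (-(1/2) - β) ≤ 0 := by linarith
  -- some rpow algebra facts
  have hdiv : (a/γ) ^ ((1:ℝ)/2) = a ^ ((1:ℝ)/2) * γ ^ (-(1/2) : ℝ) := by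
    rw [div_eq_mul_inv, Real.mul_rpow ha.le (inv_nonneg.mpr hγ.le), Real.inv_rpow hγ.le,
      ← Real.rpow_neg hγ.le]
  have hA : a ^ (-(1/2) - β) * a ^ ((1:ℝ)/2) = a ^ (-β) := by
    rw [← Real.rpow_add ha]; ring_nf
  have hdiv2 : (a/γ) ^ (-β) = a ^ (-β) * γ ^ β := by
    rw [div_eq_mul_inv, Real.mul_rpow ha.le (inv_nonneg.mpr hγ.le), Real.inv_rpow hγ.le,
      ← Real.rpow_neg hγ.le, neg_neg]
  have hg : γ ^ (-(1/2) - β) * γ ^ β = γ ^ (-(1/2) : ℝ) := by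
    rw [← Real.rpow_add hγ]; ring_nf
  -- integrability on [s₀, t]
  have hcont : ContinuousOn (fun s => (μ₀ - μ - γ * s) ^ (-(1 / 2) - β)) (Set.uIcc s₀ t) := by
    apply ContinuousOn.rpow_const (by fun_prop)
    intro x hx
    rw [Set.uIcc_of_le hs₀t] at hx
    exact Or.inl (ne_of_gt (hbpos x hx.2))
  have hsing : IntervalIntegrable (fun s => (t - s) ^ (-(1/2) : ℝ)) MeasureTheory.volume s₀ t := by
    have := (intervalIntegral.intervalIntegrable_rpow' (a := t - s₀) (b := 0) (r := -(1/2))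
      (by norm_num)).comp_sub_left t
    simpa using this
  have hInt2 : IntervalIntegrable F MeasureTheory.volume s₀ t := by
    simpa [hF] using hsing.continuousOn_mul hcont
  have hInt1 : IntervalIntegrable F MeasureTheory.volume 0 s₀ := by
    apply ContinuousOn.intervalIntegrable
    apply ContinuousOn.mul
    · apply ContinuousOn.rpow_const (by fun_prop)
      intro x hx
      rw [Set.uIcc_of_le hs₀0] at hx
      exact Or.inl (ne_of_gt (hbpos x (hx.2.trans hs₀t)))
    · apply ContinuousOn.rpow_const (by fun_prop)
      intro x hx
      rw [Set.uIcc_of_le hs₀0] at hx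
      have : x < t := lt_of_le_of_lt hx.2 hs₀lt
      exact Or.inl (ne_of_gt (by linarith : (0:ℝ) < t - x))
  -- computed integral for piece 2
  have hint_pow : (∫ s in s₀..t, (t - s) ^ (-(1/2) : ℝ)) = 2 * (t - s₀) ^ ((1:ℝ)/2) := by
    have hc := intervalIntegral.integral_comp_sub_left (a := s₀) (b := t)
      (fun x : ℝ => x ^ (-(1/2) : ℝ)) t
    simp only [sub_self] at hc
    rw [hc, integral_rpow (Or.inl (by norm_num))]
    rw [Real.zero_rpow (by norm_num)]
    norm_num
    ring
  -- piece 2 bound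
  have h2 : (∫ s in s₀..t, F s) ≤ 2 * a ^ (-β) * γ ^ (-(1/2) : ℝ) := by
    have hmono : ∀ s ∈ Set.Icc s₀ t, F s ≤ a ^ (-(1/2) - β) * (t - s) ^ (-(1/2) : ℝ) := by
      intro s hs
      apply mul_le_mul_of_nonneg_right _ (Real.rpow_nonneg (by linarith [hs.2]) _)
      apply Real.rpow_le_rpow_of_nonpos ha _ hexp
      rw [hbase]; nlinarith [hs.2]
    have hG2 : IntervalIntegrable (fun s => a ^ (-(1/2) - β) * (t - s) ^ (-(1/2) : ℝ))
        MeasureTheory.volume s₀ t := hsing.const_mul _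
    calc (∫ s in s₀..t, F s)
        ≤ ∫ s in s₀..t, a ^ (-(1/2) - β) * (t - s) ^ (-(1/2) : ℝ) :=
          intervalIntegral.integral_mono_on hs₀t hInt2 hG2 hmono
      _ = a ^ (-(1/2) - β) * (2 * (t - s₀) ^ ((1:ℝ)/2)) := by
          rw [intervalIntegral.integral_const_mul, hint_pow]
      _ ≤ a ^ (-(1/2) - β) * (2 * (a/γ) ^ ((1:ℝ)/2)) := by
          have hle := Real.rpow_le_rpow (by linarith : (0:ℝ) ≤ t - s₀) hts₀
            (by norm_num : (0:ℝ) ≤ 1/2)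
          have h0 : (0:ℝ) ≤ a ^ (-(1/2) - β) := Real.rpow_nonneg ha.le _
          nlinarith [hle, h0]
      _ = 2 * a ^ (-β) * γ ^ (-(1/2) : ℝ) := by
          rw [hdiv]
          linear_combination 2 * γ ^ (-(1/2) : ℝ) * hA
  -- piece 1 bound
  have h1 : (∫ s in (0:ℝ)..s₀, F s) ≤ 2 * a ^ (-β) * γ ^ (-(1/2) : ℝ) := by
    rcases le_or_gt t (a/γ) with hcase | hcase
    · have hz : s₀ = 0 := max_eq_left (by linarith)
      rw [hz, intervalIntegral.integral_same]
      positivity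
    · have hs₀eq : s₀ = t - a / γ := max_eq_right (by linarith)
      have hts₀' : t - s₀ = a / γ := by rw [hs₀eq]; ring
      have hmono : ∀ s ∈ Set.Icc (0:ℝ) s₀, F s ≤ γ ^ (-(1/2) - β) * (t - s) ^ (-1 - β) := by
        intro s hs
        have hts : a / γ ≤ t - s := by
          have := hs.2; rw [hs₀eq] at this; linarith
        have htspos : 0 < t - s := lt_of_lt_of_le haγ hts
        have hb1 : (μ₀ - μ - γ * s) ^ (-(1/2) - β) ≤ (γ * (t - s)) ^ (-(1/2) - β) := by
          apply Real.rpow_le_rpow_of_nonpos (by positivity) _ hexp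
          rw [hbase]; nlinarith
        calc F s ≤ (γ * (t - s)) ^ (-(1/2) - β) * (t - s) ^ (-(1/2) : ℝ) :=
              mul_le_mul_of_nonneg_right hb1 (Real.rpow_nonneg htspos.le _)
          _ = γ ^ (-(1/2) - β) * (t - s) ^ (-1 - β) := by
              rw [Real.mul_rpow hγ.le htspos.le, mul_assoc, ← Real.rpow_add htspos,
                show (-(1/2) - β + -(1/2)) = -1 - β from by ring]
      have hG1 : IntervalIntegrable (fun s => γ ^ (-(1/2) - β) * (t - s) ^ (-1 - β))
          MeasureTheory.volume 0 s₀ := by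
        apply ContinuousOn.intervalIntegrable
        apply ContinuousOn.mul continuousOn_const
        apply ContinuousOn.rpow_const (by fun_prop)
        intro x hx
        rw [Set.uIcc_of_le hs₀0] at hx
        have : x < t := lt_of_le_of_lt hx.2 hs₀lt
        exact Or.inl (ne_of_gt (by linarith : (0:ℝ) < t - x))
      have hcomp : (∫ s in (0:ℝ)..s₀, (t - s) ^ (-1 - β)) = ((a/γ) ^ (-β) - t ^ (-β)) / β := by
        have hc := intervalIntegral.integral_comp_sub_left (a := (0:ℝ)) (b := s₀)
          (fun x : ℝ => x ^ (-1 - β)) t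
        simp only [sub_zero] at hc
        have h0mem : (0:ℝ) ∉ Set.uIcc (t - s₀) t :=
          Set.notMem_uIcc_of_lt (by rw [hts₀']; exact haγ) ht
        rw [hc, integral_rpow (Or.inr ⟨by intro h; linarith [h], h0mem⟩)]
        rw [show (-1 - β) + 1 = -β from by ring, hts₀', div_neg, ← neg_div, neg_sub]
      have hkey : γ ^ (-(1/2) - β) * (a/γ) ^ (-β) = a ^ (-β) * γ ^ (-(1/2) : ℝ) := by
        rw [hdiv2]
        linear_combination a ^ (-β) * hg
      have hγpow : (0:ℝ) < γ ^ (-(1/2) - β) := Real.rpow_pos_of_pos hγ _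
      have htβ : (0:ℝ) ≤ t ^ (-β) := Real.rpow_nonneg ht.le _
      calc (∫ s in (0:ℝ)..s₀, F s)
          ≤ ∫ s in (0:ℝ)..s₀, γ ^ (-(1/2) - β) * (t - s) ^ (-1 - β) :=
            intervalIntegral.integral_mono_on hs₀0 hInt1 hG1 hmono
        _ = γ ^ (-(1/2) - β) * (((a/γ) ^ (-β) - t ^ (-β)) / β) := by
            rw [intervalIntegral.integral_const_mul, hcomp]
        _ ≤ γ ^ (-(1/2) - β) * ((a/γ) ^ (-β) / β) := by
            apply mul_le_mul_of_nonneg_left _ hγpow.le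
            exact (div_le_div_iff_of_pos_right hβ0).mpr (by linarith)
        _ = a ^ (-β) * γ ^ (-(1/2) : ℝ) / β := by
            rw [← mul_div_assoc, hkey]
        _ ≤ 2 * a ^ (-β) * γ ^ (-(1/2) : ℝ) := by
            have hpos : (0:ℝ) ≤ a ^ (-β) * γ ^ (-(1/2) : ℝ) := by positivity
            rw [div_le_iff₀ hβ0]
            nlinarith [hpos, hβ1]
  -- combine
  have hI : (∫ s in (0:ℝ)..t, F s) ≤ 4 * a ^ (-β) * γ ^ (-(1/2) : ℝ) := by
    rw [← intervalIntegral.integral_add_adjacent_intervals hInt1 hInt2]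
    linarith
  have hfin := mul_le_mul_of_nonneg_left hI (Real.rpow_nonneg ha.le β)
  have heq : a ^ β * (4 * a ^ (-β) * γ ^ (-(1/2) : ℝ)) = 4 / Real.sqrt γ := by
    have h1' : a ^ β * a ^ (-β) = 1 := by
      rw [← Real.rpow_add ha]; simp
    have hγh : γ ^ (-(1/2) : ℝ) * γ ^ ((1:ℝ)/2) = 1 := by
      rw [← Real.rpow_add hγ]; norm_num
    rw [Real.sqrt_eq_rpow, eq_div_iff (ne_of_gt (Real.rpow_pos_of_pos hγ _))]
    linear_combination (4 * (γ ^ (-(1/2) : ℝ) * γ ^ ((1:ℝ)/2))) * h1' + 4 * hγh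
  calc a ^ β * ∫ s in (0:ℝ)..t, F s ≤ a ^ β * (4 * a ^ (-β) * γ ^ (-(1/2) : ℝ)) := hfin
    _ = 4 / Real.sqrt γ := heq
end
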